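/- For all ρ ∈ (0,1) the functions ψ₀(ρ) = (arctanh ρ − ρ)/ρ³ and ψ₁(ρ) = ρ⁻³ each satisfy the ODE (ρ² − 1)·u''(ρ) + (6ρ − 4/ρ)·u'(ρ) + 6·u(ρ) = 0, and their Wronskian satisfies ψ₀(ρ)·ψ₁'(ρ) − ψ₀'(ρ)·ψ₁(ρ) = −1/(ρ⁴·(1 − ρ²)) for all ρ ∈ (0,1). -/

import Mathlib

/-!
Writing `u = v / ρ³` conjugates the operator `(ρ² − 1)u'' + (6ρ − 4/ρ)u' + 6u` into
`ρ⁻³((ρ² − 1)v'' + (2/ρ)v')`: the zeroth-order terms cancel. So `ψ₁` corresponds to `v = 1`,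
and `ψ₀` to `v = arctanh ρ − ρ`, for which `v' = ρ²/(1 − ρ²)` solves `(ρ² − 1)v'' + (2/ρ)v' = 0`.
Likewise the Wronskian of `v₀/ρ³` and `1/ρ³` is `−v₀'/ρ⁶`.
-/

open Set Filter Topology

noncomputable def arctanh (x : ℝ) : ℝ := (1 / 2) * Real.log ((1 + x) / (1 - x))

theorem hasDerivAt_arctanh {x : ℝ} (hx : x ∈ Ioo (-1 : ℝ) 1) :
    HasDerivAt arctanh (1 - x ^ 2)⁻¹ x := by
  obtain ⟨hx₁, hx₂⟩ := hx
  have hplus : 1 + x ≠ 0 := by linarith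
  have hminus : 1 - x ≠ 0 := by linarith
  have hquot : HasDerivAt (fun y => (1 + y) / (1 - y)) (2 / (1 - x) ^ 2) x := by
    refine (((hasDerivAt_id x).const_add 1).div ((hasDerivAt_id x).const_sub 1)
      hminus).congr_deriv ?_
    simp only [id]
    ring
  refine ((hquot.log (div_ne_zero hplus hminus)).const_mul (1 / 2)).congr_deriv ?_
  have hsq : 1 - x ^ 2 = (1 + x) * (1 - x) := by ring
  rw [hsq]
  field_simp

theorem hasDerivAt_inv_one_sub_sq {x : ℝ} (hx : 1 - x ^ 2 ≠ 0) :
    HasDerivAt (fun y : ℝ => (1 - y ^ 2)⁻¹) (2 * x / (1 - x ^ 2) ^ 2) x := by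
  refine (((hasDerivAt_pow 2 x).const_sub 1).inv hx).congr_deriv ?_
  ring

theorem deriv_deriv_eq_of_eventually_hasDerivAt {f f' : ℝ → ℝ} {f'' x : ℝ}
    (hf : ∀ᶠ y in 𝓝 x, HasDerivAt f (f' y) y) (hf' : HasDerivAt f' f'' x) :
    deriv (deriv f) x = f'' :=
  (EventuallyEq.deriv_eq (hf.mono fun _ hy => hy.deriv)).trans hf'.deriv

noncomputable def radialOp (u : ℝ → ℝ) (ρ : ℝ) : ℝ :=
  (ρ ^ 2 - 1) * deriv (deriv u) ρ + (6 * ρ - 4 / ρ) * deriv u ρ + 6 * u ρ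

section DivCube

variable {u v v' : ℝ → ℝ} {x : ℝ}

theorem hasDerivAt_div_cube (hu : ∀ y, u y = v y / y ^ 3) {y d : ℝ} (hv : HasDerivAt v d y)
    (hy : y ≠ 0) : HasDerivAt u (d / y ^ 3 - 3 * v y / y ^ 4) y := by
  rw [funext hu]
  refine (hv.div (hasDerivAt_pow 3 y) (pow_ne_zero 3 hy)).congr_deriv ?_
  field_simp
  ring

theorem radialOp_div_cube (hu : ∀ y, u y = v y / y ^ 3)
    (hv : ∀ᶠ y in 𝓝 x, HasDerivAt v (v' y) y) {v'' : ℝ} (hv' : HasDerivAt v' v'' x)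
    (hx : x ≠ 0) :
    radialOp u x = ((x ^ 2 - 1) * v'' + 2 / x * v' x) / x ^ 3 := by
  have hu' : ∀ᶠ y in 𝓝 x, HasDerivAt u (v' y / y ^ 3 - 3 * v y / y ^ 4) y :=
    (hv.and (eventually_ne_nhds hx)).mono fun y ⟨hvy, hy⟩ => hasDerivAt_div_cube hu hvy hy
  have hv₀ := hv.self_of_nhds
  have hu'' := (hv'.div (hasDerivAt_pow 3 x) (pow_ne_zero 3 hx)).sub
    ((hv₀.const_mul 3).div (hasDerivAt_pow 4 x) (pow_ne_zero 4 hx))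
  rw [radialOp, deriv_deriv_eq_of_eventually_hasDerivAt hu' hu'', hu'.self_of_nhds.deriv, hu]
  field_simp
  ring

theorem wronskian_div_cube_inv_cube {w : ℝ → ℝ} (hu : ∀ y, u y = v y / y ^ 3)
    (hw : ∀ y, w y = (y ^ 3)⁻¹) {d : ℝ} (hv : HasDerivAt v d x) (hx : x ≠ 0) :
    u x * deriv w x - deriv u x * w x = -d / x ^ 6 := by
  have hw' : HasDerivAt w (0 / x ^ 3 - 3 * 1 / x ^ 4) x :=
    hasDerivAt_div_cube (fun y => by rw [hw, one_div]) (hasDerivAt_const x 1) hx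
  rw [hw'.deriv, (hasDerivAt_div_cube hu hv hx).deriv, hu, hw]
  field_simp
  ring

end DivCube

/-- On `(0,1)` the functions `ψ₀(ρ) = (arctanh ρ − ρ)/ρ³` and
`ψ₁(ρ) = ρ⁻³` both solve `(ρ² − 1)u'' + (6ρ − 4/ρ)u' + 6u = 0`, with Wronskian
`ψ₀ψ₁' − ψ₀'ψ₁ = −1/(ρ⁴(1 − ρ²))`. -/
theorem stmt_4 (ψ₀ ψ₁ : ℝ → ℝ)
    (hψ₀ : ∀ ρ : ℝ, ψ₀ ρ = (arctanh ρ - ρ) / ρ ^ 3)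
    (hψ₁ : ∀ ρ : ℝ, ψ₁ ρ = (ρ ^ 3)⁻¹) :
    ∀ ρ ∈ Ioo (0:ℝ) 1,
      ((ρ ^ 2 - 1) * deriv (deriv ψ₀) ρ + (6 * ρ - 4 / ρ) * deriv ψ₀ ρ + 6 * ψ₀ ρ = 0) ∧
      ((ρ ^ 2 - 1) * deriv (deriv ψ₁) ρ + (6 * ρ - 4 / ρ) * deriv ψ₁ ρ + 6 * ψ₁ ρ = 0) ∧
      ψ₀ ρ * deriv ψ₁ ρ - deriv ψ₀ ρ * ψ₁ ρ = -1 / (ρ ^ 4 * (1 - ρ ^ 2)) := by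
  intro ρ ⟨hρ₀, hρ₁⟩
  have hρ : ρ ≠ 0 := hρ₀.ne'
  have hsq : 1 - ρ ^ 2 ≠ 0 := by nlinarith
  have hv₀ : ∀ᶠ y in 𝓝 ρ, HasDerivAt (fun y => arctanh y - y) ((1 - y ^ 2)⁻¹ - 1) y :=
    eventually_of_mem (Ioo_mem_nhds (by linarith : (-1 : ℝ) < ρ) hρ₁) fun y hy =>
      (hasDerivAt_arctanh hy).sub (hasDerivAt_id y)
  have hψ₁' : ∀ y, ψ₁ y = (fun _ => (1 : ℝ)) y / y ^ 3 := fun y => by rw [hψ₁, one_div]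
  refine ⟨?_, ?_, ?_⟩
  · change radialOp ψ₀ ρ = 0
    rw [radialOp_div_cube hψ₀ hv₀ ((hasDerivAt_inv_one_sub_sq hsq).sub_const 1) hρ]
    field_simp
    ring
  · change radialOp ψ₁ ρ = 0
    rw [radialOp_div_cube hψ₁' (.of_forall fun y => hasDerivAt_const y 1) (hasDerivAt_const ρ 0) hρ]
    simp
  · rw [wronskian_div_cube_inv_cube hψ₀ hψ₁ hv₀.self_of_nhds hρ]
    field_simp
    ring
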